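/- arXiv:2505.03210 — 2 statements merged into one kernel-verified Lean document; each statement's English description precedes it below -/
import Mathlib

section
/- Let (B, ‖·‖_B) be a Banach space, let p, q > 0, and let (a_n)_{n≥1} be a sequence in B such that the Cesàro averages (1/N)·∑_{n=1}^{N} a_n converge in norm to some a ∈ B as N → ∞. Then the weighted averages (A_N^{p,q})^{-1}·∑_{n=1}^{N} w_{p,q}(n/N)·a_n also converge in norm to a as N → ∞. -/
open MeasureTheory Filter

noncomputable def wpq (p q : ℝ) (x : ℝ) : ℝ :=
  if x ∈ Set.Ioo (0 : ℝ) 1 then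
    (∫ s in (0:ℝ)..1, Real.exp (-(s ^ (-p) * (1 - s) ^ (-q))))⁻¹ *
      Real.exp (-(x ^ (-p) * (1 - x) ^ (-q)))
  else 0

noncomputable def Apq (p q : ℝ) (N : ℕ) : ℝ :=
  ∑ n ∈ Finset.range N, wpq p q ((n : ℝ) / N)

/-!
The weight `w = w_{p,q}` is Lipschitz on `[0, 1]` and vanishes at `1`: on `(0, 1)` its
derivative is a constant multiple of `e^{-u} u (p/x - q/(1-x))` with `u = x^{-p} (1-x)^{-q}`,
which is bounded because `1/x ≤ u^{1/p}`, `1/(1-x) ≤ u^{1/q}` and `u^s e^{-u} ≤ s^s`.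

For any such weight, summation by parts writes `∑ w(n/N) b_n` against the partial sums
`S_n = b_1 + ⋯ + b_n` with increments `w((n+1)/N) - w(n/N) = O(1/N)`, so
`N⁻¹ ∑ w(n/N) b_n = O(N⁻¹ ∑_{n<N} ‖S_n/n‖)`, which tends to `0` by Cesàro's lemma when
`S_n/n → 0`. Applied to `b_n = a_n - L`, together with the Riemann sums
`N⁻¹ ∑ w(n/N) → ∫ w = 1` (so that `A_N ~ N`), this gives the theorem.
-/

open Finset Topology
open scoped NNReal

theorem sum_Icc_by_parts {R M : Type*} [Ring R] [AddCommGroup M] [Module R M]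
    (f : ℕ → R) (b : ℕ → M) (N : ℕ) :
    ∑ n ∈ Icc 1 N, f n • b n =
      f N • ∑ k ∈ Icc 1 N, b k - ∑ n ∈ range N, (f (n + 1) - f n) • ∑ k ∈ Icc 1 n, b k := by
  induction N with
  | zero => simp
  | succ N ih =>
    rw [sum_Icc_succ_top (by omega), sum_Icc_succ_top (by omega), sum_range_succ, ih]
    simp only [smul_add, sub_smul]
    abel

theorem sum_Icc_one_eq_sum_range {M : Type*} [AddCommMonoid M] (f : ℕ → M) (N : ℕ) :
    ∑ n ∈ Icc 1 N, f n = ∑ n ∈ range N, f (n + 1) := by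
  rw [range_eq_Ico, sum_Ico_add']
  rfl

theorem natCast_div_mem_Icc {m N : ℕ} (hm : m ≤ N) : (m / N : ℝ) ∈ Set.Icc 0 1 :=
  ⟨by positivity, div_le_one_of_le₀ (by exact_mod_cast hm) N.cast_nonneg⟩

theorem abs_integral_sub_mul_le_of_lipschitzOnWith {g : ℝ → ℝ} {K : ℝ≥0} {a b : ℝ}
    (hab : a ≤ b) (hg : LipschitzOnWith K g (Set.Icc a b)) :
    |(∫ x in a..b, g x) - (b - a) * g b| ≤ K * (b - a) ^ 2 := by
  have hint : IntervalIntegrable g volume a b :=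
    (hg.continuousOn.mono (Set.uIcc_of_le hab).subset).intervalIntegrable
  have hdist : ∀ x ∈ Set.uIoc a b, ‖g x - g b‖ ≤ K * (b - a) := by
    intro x hx
    rw [Set.uIoc_of_le hab] at hx
    calc ‖g x - g b‖ ≤ K * dist x b :=
          hg.dist_le_mul x (Set.Ioc_subset_Icc_self hx) b (Set.right_mem_Icc.2 hab)
      _ ≤ K * (b - a) := by
          rw [Real.dist_eq, abs_sub_comm, abs_of_nonneg (sub_nonneg.2 hx.2)]
          gcongr
          exact hx.1.le
  calc |(∫ x in a..b, g x) - (b - a) * g b| = ‖∫ x in a..b, (g x - g b)‖ := by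
        rw [intervalIntegral.integral_sub hint intervalIntegrable_const,
          intervalIntegral.integral_const, smul_eq_mul, Real.norm_eq_abs]
    _ ≤ K * (b - a) * |b - a| := intervalIntegral.norm_integral_le_of_norm_le_const hdist
    _ = K * (b - a) ^ 2 := by rw [abs_of_nonneg (sub_nonneg.2 hab)]; ring

theorem abs_integral_sub_inv_mul_sum_Icc_le_of_lipschitzOnWith {g : ℝ → ℝ} {K : ℝ≥0}
    (hg : LipschitzOnWith K g (Set.Icc 0 1)) {N : ℕ} (hN : 0 < N) :
    |(∫ x in (0 : ℝ)..1, g x) - (N : ℝ)⁻¹ * ∑ n ∈ Icc 1 N, g (n / N)| ≤ K / N := by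
  have hN' : (0 : ℝ) < N := by exact_mod_cast hN
  have hcell : ∀ k < N, LipschitzOnWith K g (Set.Icc (k / N : ℝ) ((k + 1 : ℕ) / N)) :=
    fun k hk =>
      hg.mono (Set.Icc_subset_Icc (natCast_div_mem_Icc hk.le).1 (natCast_div_mem_Icc hk).2)
  have hle : ∀ k : ℕ, (k / N : ℝ) ≤ (k + 1 : ℕ) / N := fun k => by gcongr; omega
  have hsplit : ∫ x in (0 : ℝ)..1, g x =
      ∑ k ∈ range N, ∫ x in (k / N : ℝ)..((k + 1 : ℕ) / N), g x := by
    rw [intervalIntegral.sum_integral_adjacent_intervals (a := fun k : ℕ => (k / N : ℝ))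
      fun k hk => (hcell k hk).continuousOn.intervalIntegrable_of_Icc (hle k)]
    simp [hN'.ne']
  have hRiemann : (N : ℝ)⁻¹ * ∑ n ∈ Icc 1 N, g (n / N) =
      ∑ k ∈ range N, (((k + 1 : ℕ) / N : ℝ) - k / N) * g ((k + 1 : ℕ) / N) := by
    rw [sum_Icc_one_eq_sum_range, mul_sum]
    refine sum_congr rfl fun k _ => ?_
    rw [← sub_div, Nat.cast_succ, add_sub_cancel_left, one_div]
  rw [hsplit, hRiemann, ← sum_sub_distrib]
  calc _ ≤ ∑ k ∈ range N, |(∫ x in (k / N : ℝ)..((k + 1 : ℕ) / N), g x) -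
          (((k + 1 : ℕ) / N : ℝ) - k / N) * g ((k + 1 : ℕ) / N)| := abs_sum_le_sum_abs _ _
    _ ≤ ∑ k ∈ range N, K * (((k + 1 : ℕ) / N : ℝ) - k / N) ^ 2 :=
        sum_le_sum fun k hk =>
          abs_integral_sub_mul_le_of_lipschitzOnWith (hle k) (hcell k (mem_range.1 hk))
    _ = K / N := by
        simp only [← sub_div, Nat.cast_succ, add_sub_cancel_left, sum_const, card_range,
          nsmul_eq_mul]
        field_simp

theorem tendsto_inv_mul_sum_Icc_of_lipschitzOnWith {g : ℝ → ℝ} {K : ℝ≥0}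
    (hg : LipschitzOnWith K g (Set.Icc 0 1)) :
    Tendsto (fun N : ℕ => (N : ℝ)⁻¹ * ∑ n ∈ Icc 1 N, g (n / N)) atTop
      (𝓝 (∫ x in (0 : ℝ)..1, g x)) := by
  refine tendsto_iff_norm_sub_tendsto_zero.2 <|
    squeeze_zero' (Eventually.of_forall fun _ => norm_nonneg _) ?_
      (tendsto_const_div_atTop_nhds_zero_nat (K : ℝ))
  filter_upwards [eventually_gt_atTop 0] with N hN
  rw [Real.norm_eq_abs, abs_sub_comm]
  exact abs_integral_sub_inv_mul_sum_Icc_le_of_lipschitzOnWith hg hN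

section Summation

variable {E : Type*} [NormedAddCommGroup E] [NormedSpace ℝ E]

theorem norm_sum_Icc_smul_le_of_lipschitzOnWith {g : ℝ → ℝ} {K : ℝ≥0}
    (hg : LipschitzOnWith K g (Set.Icc 0 1)) (hg1 : g 1 = 0) (b : ℕ → E) (N : ℕ) :
    ‖∑ n ∈ Icc 1 N, g (n / N) • b n‖ ≤ K / N * ∑ n ∈ range N, ‖∑ k ∈ Icc 1 n, b k‖ := by
  rcases N.eq_zero_or_pos with rfl | hN
  · simp
  have hN' : (0 : ℝ) < N := by exact_mod_cast hN
  have hstep : ∀ n < N, |g ((n + 1 : ℕ) / N) - g (n / N)| ≤ K / N := by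
    intro n hn
    have := hg.dist_le_mul _ (natCast_div_mem_Icc hn) _ (natCast_div_mem_Icc hn.le)
    rw [Real.dist_eq, Real.dist_eq, ← sub_div, Nat.cast_succ, add_sub_cancel_left,
      abs_of_pos (one_div_pos.2 hN'), mul_one_div] at this
    rwa [Nat.cast_succ]
  rw [sum_Icc_by_parts, div_self hN'.ne', hg1, zero_smul, zero_sub, norm_neg, mul_sum]
  refine (norm_sum_le _ _).trans (sum_le_sum fun n hn => ?_)
  rw [norm_smul, Real.norm_eq_abs]
  exact mul_le_mul_of_nonneg_right (hstep n (mem_range.1 hn)) (norm_nonneg _)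

theorem tendsto_inv_smul_sum_Icc_smul_of_lipschitzOnWith {g : ℝ → ℝ} {K : ℝ≥0}
    (hg : LipschitzOnWith K g (Set.Icc 0 1)) (hg1 : g 1 = 0) {b : ℕ → E}
    (hb : Tendsto (fun N : ℕ => (N : ℝ)⁻¹ • ∑ n ∈ Icc 1 N, b n) atTop (𝓝 0)) :
    Tendsto (fun N : ℕ => (N : ℝ)⁻¹ • ∑ n ∈ Icc 1 N, g (n / N) • b n) atTop (𝓝 0) := by
  have hmeans : Tendsto (fun n : ℕ => ‖(n : ℝ)⁻¹ • ∑ k ∈ Icc 1 n, b k‖) atTop (𝓝 0) := by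
    simpa using hb.norm
  have hcesaro : Tendsto (fun N : ℕ => K * ((N : ℝ)⁻¹ *
      ∑ n ∈ range N, ‖(n : ℝ)⁻¹ • ∑ k ∈ Icc 1 n, b k‖)) atTop (𝓝 0) := by
    simpa using hmeans.cesaro.const_mul (K : ℝ)
  refine squeeze_zero_norm (fun N => ?_) hcesaro
  have hterm : ∀ n ∈ range N,
      (N : ℝ)⁻¹ * ‖∑ k ∈ Icc 1 n, b k‖ ≤ ‖(n : ℝ)⁻¹ • ∑ k ∈ Icc 1 n, b k‖ := by
    intro n hn
    rcases n.eq_zero_or_pos with rfl | hn0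
    · simp
    rw [norm_smul, norm_inv, Real.norm_natCast]
    gcongr
    exact (mem_range.1 hn).le
  calc ‖(N : ℝ)⁻¹ • ∑ n ∈ Icc 1 N, g (n / N) • b n‖
      ≤ (N : ℝ)⁻¹ * (K / N * ∑ n ∈ range N, ‖∑ k ∈ Icc 1 n, b k‖) := by
        rw [norm_smul, norm_inv, Real.norm_natCast]
        gcongr
        exact norm_sum_Icc_smul_le_of_lipschitzOnWith hg hg1 b N
    _ = K * ((N : ℝ)⁻¹ * ∑ n ∈ range N, (N : ℝ)⁻¹ * ‖∑ k ∈ Icc 1 n, b k‖) := by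
        rw [← mul_sum]
        ring
    _ ≤ _ := by
        gcongr with n hn
        exact hterm n hn

theorem tendsto_inv_smul_sum_Icc_smul_of_cesaro {g : ℝ → ℝ} {K : ℝ≥0}
    (hg : LipschitzOnWith K g (Set.Icc 0 1)) (hg1 : g 1 = 0) {a : ℕ → E} {L : E}
    (h : Tendsto (fun N : ℕ => (N : ℝ)⁻¹ • ∑ n ∈ Icc 1 N, a n) atTop (𝓝 L)) :
    Tendsto (fun N : ℕ => (N : ℝ)⁻¹ • ∑ n ∈ Icc 1 N, g (n / N) • a n) atTop
      (𝓝 ((∫ x in (0 : ℝ)..1, g x) • L)) := by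
  have hcentered : Tendsto (fun N : ℕ => (N : ℝ)⁻¹ • ∑ n ∈ Icc 1 N, (a n - L)) atTop (𝓝 0) := by
    refine (sub_self L ▸ h.sub_const L).congr' ?_
    filter_upwards [eventually_gt_atTop 0] with N hN
    rw [sum_sub_distrib, sum_const, Nat.card_Icc, add_tsub_cancel_right, smul_sub,
      ← Nat.cast_smul_eq_nsmul ℝ, smul_smul, inv_mul_cancel₀ (by positivity), one_smul]
  have := (tendsto_inv_smul_sum_Icc_smul_of_lipschitzOnWith hg hg1 hcentered).add
    ((tendsto_inv_mul_sum_Icc_of_lipschitzOnWith hg).smul_const L)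
  rw [zero_add] at this
  refine this.congr fun N => ?_
  simp only [smul_sub, sum_sub_distrib, ← sum_smul, mul_smul]
  abel

end Summation

theorem lipschitzOnWith_Icc_of_abs_deriv_le {f f' : ℝ → ℝ} {a b : ℝ} {C : ℝ≥0}
    (hf : ContinuousOn f (Set.Icc a b)) (hf' : ∀ x ∈ Set.Ioo a b, HasDerivAt f (f' x) x)
    (hC : ∀ x ∈ Set.Ioo a b, |f' x| ≤ C) : LipschitzOnWith C f (Set.Icc a b) := by
  refine LipschitzOnWith.of_dist_le_mul fun x hx y hy => ?_
  wlog hxy : x < y generalizing x y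
  · rcases (not_lt.1 hxy).eq_or_lt with rfl | hyx
    · simp
    · rw [dist_comm, dist_comm x]
      exact this y hy x hx hyx
  have hsub : Set.Ioo x y ⊆ Set.Ioo a b := Set.Ioo_subset_Ioo hx.1 hy.2
  obtain ⟨c, hc, hslope⟩ := exists_hasDerivAt_eq_slope f f' hxy
    (hf.mono (Set.Icc_subset_Icc hx.1 hy.2)) fun z hz => hf' z (hsub hz)
  rw [eq_div_iff (sub_pos.2 hxy).ne'] at hslope
  rw [Real.dist_eq, Real.dist_eq, abs_sub_comm (f x), abs_sub_comm x, ← hslope, abs_mul]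
  exact mul_le_mul_of_nonneg_right (hC c (hsub hc)) (abs_nonneg _)

theorem rpow_mul_exp_neg_le {u s : ℝ} (hu : 0 ≤ u) (hs : 0 < s) :
    u ^ s * Real.exp (-u) ≤ s ^ s := by
  have hu' : u ≤ s * Real.exp (u / s) := by
    have := Real.add_one_le_exp (u / s)
    rw [← div_le_iff₀' hs]
    linarith
  calc u ^ s * Real.exp (-u) ≤ (s * Real.exp (u / s)) ^ s * Real.exp (-u) := by gcongr
    _ = s ^ s := by
        rw [Real.mul_rpow hs.le (Real.exp_pos _).le, ← Real.exp_mul, div_mul_cancel₀ u hs.ne',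
          mul_assoc, ← Real.exp_add, add_neg_cancel, Real.exp_zero, mul_one]

theorem exp_neg_mul_mul_inv_le {x u p : ℝ} (hx : 0 < x) (hp : 0 < p) (h : x ^ (-p) ≤ u) :
    Real.exp (-u) * u * x⁻¹ ≤ (1 + p⁻¹) ^ (1 + p⁻¹) := by
  have hu : 0 < u := (Real.rpow_pos_of_pos hx _).trans_le h
  have hinv : x⁻¹ ≤ u ^ p⁻¹ := by
    calc x⁻¹ = (x ^ (-p)) ^ p⁻¹ := by
          rw [← Real.rpow_mul hx.le, neg_mul, mul_inv_cancel₀ hp.ne', Real.rpow_neg_one]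
      _ ≤ u ^ p⁻¹ := by gcongr
  calc Real.exp (-u) * u * x⁻¹ ≤ Real.exp (-u) * u * u ^ p⁻¹ := by gcongr
    _ = u ^ (1 + p⁻¹) * Real.exp (-u) := by
        rw [Real.rpow_add hu, Real.rpow_one]
        ring
    _ ≤ (1 + p⁻¹) ^ (1 + p⁻¹) := rpow_mul_exp_neg_le hu.le (by positivity)

noncomputable def expBump (p q x : ℝ) : ℝ :=
  Real.exp (-(x ^ (-p) * (1 - x) ^ (-q)))

section Weight

variable {p q : ℝ}

-- In this form the weight is visibly continuous up to the endpoints of `[0, 1]`.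
theorem expBump_eq_expNegInvGlue {x : ℝ} (hx : x ∈ Set.Ioo 0 1) :
    expBump p q x = expNegInvGlue (x ^ p * (1 - x) ^ q) := by
  have h1x : 0 < 1 - x := sub_pos.2 hx.2
  have ht : 0 < x ^ p * (1 - x) ^ q :=
    mul_pos (Real.rpow_pos_of_pos hx.1 p) (Real.rpow_pos_of_pos h1x q)
  rw [expNegInvGlue, if_neg ht.not_ge, expBump, Real.rpow_neg hx.1.le, Real.rpow_neg h1x.le,
    mul_inv]

theorem continuous_expNegInvGlue_rpow_mul_rpow (hp : 0 ≤ p) (hq : 0 ≤ q) :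
    Continuous fun x : ℝ => expNegInvGlue (x ^ p * (1 - x) ^ q) :=
  (expNegInvGlue.contDiff (n := 0)).continuous.comp <|
    (Real.continuous_rpow_const hp).mul <|
      (Real.continuous_rpow_const hq).comp (continuous_const.sub continuous_id)

theorem integral_expBump_pos (hp : 0 ≤ p) (hq : 0 ≤ q) :
    0 < ∫ x in (0 : ℝ)..1, expBump p q x := by
  have hint : IntervalIntegrable (expBump p q) volume 0 1 := by
    rw [intervalIntegrable_iff_integrableOn_Ioo_of_le zero_le_one]
    exact ((continuous_expNegInvGlue_rpow_mul_rpow hp hq).integrableOn_Icc.mono_set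
      Set.Ioo_subset_Icc_self).congr_fun (fun x hx => (expBump_eq_expNegInvGlue hx).symm)
      measurableSet_Ioo
  exact intervalIntegral.intervalIntegral_pos_of_pos_on hint (fun _ _ => Real.exp_pos _)
    zero_lt_one

theorem wpq_eq_of_mem_Ioo {x : ℝ} (hx : x ∈ Set.Ioo 0 1) :
    wpq p q x = (∫ s in (0 : ℝ)..1, expBump p q s)⁻¹ * expBump p q x :=
  if_pos hx

theorem wpq_eq_zero_of_notMem {x : ℝ} (hx : x ∉ Set.Ioo 0 1) : wpq p q x = 0 :=
  if_neg hx

theorem continuousOn_wpq (hp : 0 < p) (hq : 0 < q) : ContinuousOn (wpq p q) (Set.Icc 0 1) := by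
  refine ((continuous_const (y := (∫ s in (0 : ℝ)..1, expBump p q s)⁻¹)).mul
    (continuous_expNegInvGlue_rpow_mul_rpow hp.le hq.le)).continuousOn.congr fun x hx => ?_
  by_cases hx' : x ∈ Set.Ioo 0 1
  · rw [wpq_eq_of_mem_Ioo hx', expBump_eq_expNegInvGlue hx']
    rfl
  obtain rfl | rfl : x = 0 ∨ x = 1 := by
    simp only [Set.mem_Ioo, Set.mem_Icc] at hx hx'
    by_contra! h
    exact hx' ⟨lt_of_le_of_ne hx.1 h.1.symm, lt_of_le_of_ne hx.2 h.2⟩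
  all_goals simp [wpq_eq_zero_of_notMem hx', Real.zero_rpow hp.ne', Real.zero_rpow hq.ne',
    expNegInvGlue.zero]

theorem integral_wpq (hp : 0 ≤ p) (hq : 0 ≤ q) : ∫ x in (0 : ℝ)..1, wpq p q x = 1 := by
  rw [intervalIntegral.integral_congr_Ioo_of_le zero_le_one fun x hx => wpq_eq_of_mem_Ioo hx,
    intervalIntegral.integral_const_mul, inv_mul_cancel₀ (integral_expBump_pos hp hq).ne']

theorem Apq_eq_sum_Icc (N : ℕ) : Apq p q N = ∑ n ∈ Icc 1 N, wpq p q (n / N) := by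
  have h0 : wpq p q 0 = 0 := wpq_eq_zero_of_notMem fun h => h.1.false
  have hN : wpq p q ((N : ℕ) / N) = 0 := by
    rcases N.eq_zero_or_pos with rfl | hN
    · simpa using h0
    · rw [div_self (by positivity)]
      exact wpq_eq_zero_of_notMem fun h => h.2.false
  have := sum_range_succ (fun n : ℕ => wpq p q (n / N)) N
  rw [sum_range_succ', hN, add_zero] at this
  simp only [Nat.cast_zero, zero_div, h0, add_zero] at this
  rw [Apq, ← this, sum_Icc_one_eq_sum_range]

theorem hasDerivAt_expBump {x : ℝ} (hx : x ∈ Set.Ioo 0 1) :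
    HasDerivAt (expBump p q)
      (expBump p q x * (x ^ (-p) * (1 - x) ^ (-q)) * (p * x⁻¹ - q * (1 - x)⁻¹)) x := by
  have h1x : 0 < 1 - x := sub_pos.2 hx.2
  have hu : HasDerivAt (fun y => y ^ (-p) * (1 - y) ^ (-q))
      (-p * x ^ (-p - 1) * (1 - x) ^ (-q) + x ^ (-p) * (-1 * -q * (1 - x) ^ (-q - 1))) x :=
    (Real.hasDerivAt_rpow_const (Or.inl hx.1.ne')).mul
      (((hasDerivAt_id x).const_sub 1).rpow_const (Or.inl h1x.ne'))
  convert hu.neg.exp using 1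
  · rfl
  · rw [Real.rpow_sub_one hx.1.ne', Real.rpow_sub_one h1x.ne', expBump, Pi.neg_apply]
    ring

theorem abs_deriv_expBump_le (hp : 0 < p) (hq : 0 < q) {x : ℝ} (hx : x ∈ Set.Ioo 0 1) :
    |expBump p q x * (x ^ (-p) * (1 - x) ^ (-q)) * (p * x⁻¹ - q * (1 - x)⁻¹)| ≤
      p * (1 + p⁻¹) ^ (1 + p⁻¹) + q * (1 + q⁻¹) ^ (1 + q⁻¹) := by
  have h1x : 0 < 1 - x := sub_pos.2 hx.2
  have hxu : x ^ (-p) ≤ x ^ (-p) * (1 - x) ^ (-q) :=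
    le_mul_of_one_le_right (Real.rpow_nonneg hx.1.le _)
      (Real.one_le_rpow_of_pos_of_le_one_of_nonpos h1x (by linarith [hx.1]) (by linarith))
  have h1xu : (1 - x) ^ (-q) ≤ x ^ (-p) * (1 - x) ^ (-q) :=
    le_mul_of_one_le_left (Real.rpow_nonneg h1x.le _)
      (Real.one_le_rpow_of_pos_of_le_one_of_nonpos hx.1 hx.2.le (by linarith))
  rw [expBump]
  set u := x ^ (-p) * (1 - x) ^ (-q)
  have hu : 0 ≤ u := (Real.rpow_nonneg hx.1.le _).trans hxu
  calc |Real.exp (-u) * u * (p * x⁻¹ - q * (1 - x)⁻¹)|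
      ≤ Real.exp (-u) * u * (p * x⁻¹ + q * (1 - x)⁻¹) := by
        rw [abs_mul, abs_of_nonneg (mul_nonneg (Real.exp_pos _).le hu)]
        gcongr
        refine (abs_sub _ _).trans_eq ?_
        rw [abs_of_pos (mul_pos hp (inv_pos.2 hx.1)), abs_of_pos (mul_pos hq (inv_pos.2 h1x))]
    _ = p * (Real.exp (-u) * u * x⁻¹) + q * (Real.exp (-u) * u * (1 - x)⁻¹) := by ring
    _ ≤ p * (1 + p⁻¹) ^ (1 + p⁻¹) + q * (1 + q⁻¹) ^ (1 + q⁻¹) := by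
        gcongr
        · exact exp_neg_mul_mul_inv_le hx.1 hp hxu
        · exact exp_neg_mul_mul_inv_le h1x hq h1xu

theorem exists_lipschitzOnWith_wpq (hp : 0 < p) (hq : 0 < q) :
    ∃ K, LipschitzOnWith K (wpq p q) (Set.Icc 0 1) := by
  set c := (∫ s in (0 : ℝ)..1, expBump p q s)⁻¹
  have hc : 0 ≤ c := inv_nonneg.2 (integral_expBump_pos hp.le hq.le).le
  refine ⟨Real.toNNReal (c * (p * (1 + p⁻¹) ^ (1 + p⁻¹) + q * (1 + q⁻¹) ^ (1 + q⁻¹))),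
    lipschitzOnWith_Icc_of_abs_deriv_le (continuousOn_wpq hp hq)
      (f' := fun x => c * (expBump p q x * (x ^ (-p) * (1 - x) ^ (-q)) *
        (p * x⁻¹ - q * (1 - x)⁻¹))) (fun x hx => ?_) (fun x hx => ?_)⟩
  · refine ((hasDerivAt_expBump hx).const_mul c).congr_of_eventuallyEq ?_
    filter_upwards [isOpen_Ioo.mem_nhds hx] with y hy
    exact wpq_eq_of_mem_Ioo hy
  · rw [abs_mul, abs_of_nonneg hc]
    exact (mul_le_mul_of_nonneg_left (abs_deriv_expBump_le hp hq hx) hc).trans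
      (Real.le_coe_toNNReal _)

end Weight

theorem weighted_average_tendsto_of_cesaro_tendsto_general
    {B : Type*} [NormedAddCommGroup B] [NormedSpace ℝ B]
    (p q : ℝ) (hp : 0 < p) (hq : 0 < q) (a : ℕ → B) (L : B)
    (h : Tendsto (fun N : ℕ => (N : ℝ)⁻¹ • ∑ n ∈ Finset.Icc 1 N, a n) atTop (nhds L)) :
    Tendsto (fun N : ℕ =>
        (Apq p q N)⁻¹ • ∑ n ∈ Finset.Icc 1 N, wpq p q ((n : ℝ) / N) • a n)
      atTop (nhds L) := by
  obtain ⟨K, hK⟩ := exists_lipschitzOnWith_wpq hp hq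
  have hA : Tendsto (fun N : ℕ => (N : ℝ)⁻¹ * Apq p q N) atTop (𝓝 1) := by
    simpa only [Apq_eq_sum_Icc, integral_wpq hp.le hq.le] using
      tendsto_inv_mul_sum_Icc_of_lipschitzOnWith hK
  have hS := tendsto_inv_smul_sum_Icc_smul_of_cesaro hK
    (wpq_eq_zero_of_notMem fun h => h.2.false) h
  rw [integral_wpq hp.le hq.le, one_smul] at hS
  have := (hA.inv₀ one_ne_zero).smul hS
  rw [inv_one, one_smul] at this
  refine this.congr' ?_
  filter_upwards [eventually_gt_atTop 0] with N hN
  rw [smul_smul, mul_inv, inv_inv, mul_right_comm, mul_inv_cancel₀ (by positivity), one_mul]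

/-- If the Cesàro averages of a sequence in a Banach space converge to `a`, then the
`w_{p,q}`-weighted averages converge to `a` as well. -/
theorem weighted_average_tendsto_of_cesaro_tendsto
    {B : Type*} [NormedAddCommGroup B] [NormedSpace ℝ B] [CompleteSpace B]
    (p q : ℝ) (hp : 0 < p) (hq : 0 < q) (a : ℕ → B) (L : B)
    (h : Tendsto (fun N : ℕ => (N : ℝ)⁻¹ • ∑ n ∈ Finset.Icc 1 N, a n) atTop (nhds L)) :
    Tendsto (fun N : ℕ =>
        (Apq p q N)⁻¹ • ∑ n ∈ Finset.Icc 1 N, wpq p q ((n : ℝ) / N) • a n)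
      atTop (nhds L) :=
  weighted_average_tendsto_of_cesaro_tendsto_general p q hp hq a L h
end

section
/- For every p, q > 0 there exists a sequence (a_n)_{n≥1} of real numbers such that (A_N^{p,q})^{-1}·∑_{n=1}^{N} w_{p,q}(n/N)·a_n converges to 0 as N → ∞, but the Cesàro averages (1/N)·∑_{n=1}^{N} a_n do not converge as N → ∞. In particular, convergence of the weighted averages does not imply convergence of the unweighted Birkhoff averages. -/
open MeasureTheory Filter

/-!
Take `b n = n` when `n` is a power of `4`, `b n = 0` otherwise, and `a n = b n - b (n - 1)`.
The Cesàro sums of `a` telescope to `b N`, so the Cesàro averages are `1` at the powers of `4`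
and `0` elsewhere. Summation by parts, with `w 1 = 0`, turns the weighted sum into
`-∑_{n<N} (w ((n+1)/N) - w (n/N)) b n`; since `w` is uniformly continuous and
`∑_{n<N} b n ≤ 4 N`, this is `o(N)`. Finally `A_N ≥ c N`, as `w` is bounded below by a
positive constant on `[1/3, 2/3]`.
-/

open Finset Topology

theorem sum_Icc_mul_sub_pred (f b : ℕ → ℝ) (hb : b 0 = 0) (N : ℕ) :
    ∑ n ∈ Icc 1 N, f n * (b n - b (n - 1)) =
      f N * b N - ∑ n ∈ range N, (f (n + 1) - f n) * b n := by
  induction N with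
  | zero => simp [hb]
  | succ N ih =>
    rw [sum_Icc_succ_top (Nat.le_add_left 1 N), ih, sum_range_succ, Nat.add_sub_cancel]
    ring

theorem sum_Icc_sub_pred (b : ℕ → ℝ) (hb : b 0 = 0) (N : ℕ) :
    ∑ n ∈ Icc 1 N, (b n - b (n - 1)) = b N := by
  simpa using sum_Icc_mul_sub_pred 1 b hb N

theorem tendsto_inv_mul_sum_mul_sub_pred {f : ℝ → ℝ} (hf : UniformContinuous f) (hf1 : f 1 = 0)
    {b : ℕ → ℝ} (hb0 : b 0 = 0) {C : ℝ} (hb : ∀ N : ℕ, ∑ n ∈ range N, |b n| ≤ C * N) :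
    Tendsto (fun N : ℕ => (N : ℝ)⁻¹ * ∑ n ∈ Icc 1 N, f (n / N) * (b n - b (n - 1)))
      atTop (𝓝 0) := by
  have hC : 0 ≤ C := by simpa [hb0] using hb 1
  rw [Metric.tendsto_atTop]
  intro ε hε
  obtain ⟨δ, hδ, hfδ⟩ := Metric.uniformContinuous_iff.1 hf (ε / (C + 1)) (by positivity)
  obtain ⟨N₀, hN₀⟩ := exists_nat_one_div_lt hδ
  refine ⟨N₀ + 1, fun N hN => ?_⟩
  have hNpos : (0 : ℝ) < N := by exact_mod_cast (by omega : 0 < N)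
  have hstep : ∀ n : ℕ, |f ((n + 1 : ℕ) / N) - f (n / N)| ≤ ε / (C + 1) := by
    intro n
    refine (hfδ ?_).le
    rw [Real.dist_eq, Nat.cast_succ, add_div, add_sub_cancel_left, abs_of_pos (by positivity)]
    calc 1 / (N : ℝ) ≤ 1 / ((N₀ : ℝ) + 1) := by gcongr; exact_mod_cast hN
      _ < δ := hN₀
  rw [sum_Icc_mul_sub_pred _ b hb0, div_self hNpos.ne', hf1, zero_mul, zero_sub, mul_neg,
    dist_zero_right, norm_neg, Real.norm_eq_abs, abs_mul, abs_inv, abs_of_pos hNpos]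
  calc (N : ℝ)⁻¹ * |∑ n ∈ range N, (f ((n + 1 : ℕ) / N) - f (n / N)) * b n|
      ≤ (N : ℝ)⁻¹ * ∑ n ∈ range N, ε / (C + 1) * |b n| := by
        gcongr
        refine (abs_sum_le_sum_abs _ _).trans (sum_le_sum fun n _ => ?_)
        rw [abs_mul]
        exact mul_le_mul_of_nonneg_right (hstep n) (abs_nonneg _)
    _ ≤ (N : ℝ)⁻¹ * (ε / (C + 1) * (C * N)) := by
        rw [← mul_sum]
        gcongr
        exact hb N
    _ = ε * (C / (C + 1)) := by field_simp
    _ < ε := mul_lt_of_lt_one_right hε ((div_lt_one (by positivity)).2 (lt_add_one C))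

theorem exists_pos_mul_le_sum_range {f : ℝ → ℝ} (hf : ContinuousOn f (Set.Icc (1 / 3) (2 / 3)))
    (hf_pos : ∀ x ∈ Set.Icc (1 / 3 : ℝ) (2 / 3), 0 < f x) (hf_nonneg : ∀ x, 0 ≤ f x) :
    ∃ c > 0, ∀ᶠ N : ℕ in atTop, c * N ≤ ∑ n ∈ range N, f (n / N) := by
  obtain ⟨x₀, hx₀, hmin⟩ :=
    isCompact_Icc.exists_isMinOn (Set.nonempty_Icc.2 (by norm_num)) hf
  refine ⟨f x₀ / 6, by linarith [hf_pos x₀ hx₀], ?_⟩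
  filter_upwards [eventually_ge_atTop 4] with N hN
  have hNpos : (0 : ℝ) < N := by exact_mod_cast (by omega : 0 < N)
  set s := Icc (N / 3 + 1) (2 * N / 3)
  have hs_mem : ∀ n ∈ s, (n / N : ℝ) ∈ Set.Icc (1 / 3) (2 / 3) := by
    intro n hn
    rw [mem_Icc] at hn
    have h₁ : (N : ℝ) ≤ 3 * n := by exact_mod_cast (by omega : N ≤ 3 * n)
    have h₂ : 3 * (n : ℝ) ≤ 2 * N := by exact_mod_cast (by omega : 3 * n ≤ 2 * N)
    constructor
    · rw [le_div_iff₀ hNpos]; linarith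
    · rw [div_le_iff₀ hNpos]; linarith
  have hcard : (N : ℝ) ≤ 6 * s.card := by
    exact_mod_cast (by rw [Nat.card_Icc]; omega : N ≤ 6 * s.card)
  calc f x₀ / 6 * N ≤ s.card * f x₀ := by nlinarith [hf_pos x₀ hx₀]
    _ ≤ ∑ n ∈ s, f (n / N) := by
        simpa using card_nsmul_le_sum s (fun n : ℕ => f (n / N)) _ fun n hn => hmin (hs_mem n hn)
    _ ≤ ∑ n ∈ range N, f (n / N) := by
        refine sum_le_sum_of_subset_of_nonneg (fun n hn => ?_) fun _ _ _ => hf_nonneg _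
        simp only [s, mem_Icc] at hn
        exact mem_range.2 (by omega)

theorem tendsto_inv_mul_of_mul_le {A S : ℕ → ℝ} {c : ℝ} (hc : 0 < c)
    (hA : ∀ᶠ N : ℕ in atTop, c * N ≤ A N)
    (hS : Tendsto (fun N : ℕ => (N : ℝ)⁻¹ * S N) atTop (𝓝 0)) :
    Tendsto (fun N : ℕ => (A N)⁻¹ * S N) atTop (𝓝 0) := by
  refine squeeze_zero_norm' ?_ (by simpa using (hS.norm.const_mul c⁻¹))
  filter_upwards [hA, eventually_ge_atTop 1] with N hAN hN
  have hNpos : (0 : ℝ) < N := by exact_mod_cast hN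
  have hApos : 0 < A N := lt_of_lt_of_le (by positivity) hAN
  rw [norm_mul, norm_inv, Real.norm_of_nonneg hApos.le, Real.norm_eq_abs, ← mul_assoc, ← mul_inv]
  gcongr

theorem integral_exp_neg_rpow_mul_rpow_pos (p q : ℝ) :
    0 < ∫ s in (0 : ℝ)..1, Real.exp (-(s ^ (-p) * (1 - s) ^ (-q))) := by
  refine intervalIntegral.intervalIntegral_pos_of_pos_on ?_ (fun x _ => Real.exp_pos _) one_pos
  refine (intervalIntegrable_const (c := (1 : ℝ))).mono_fun (by fun_prop) ?_
  rw [Set.uIoc_of_le zero_le_one]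
  filter_upwards [ae_restrict_mem measurableSet_Ioc] with x hx
  have h₁ : 0 ≤ x ^ (-p) := Real.rpow_nonneg hx.1.le _
  have h₂ : 0 ≤ (1 - x) ^ (-q) := Real.rpow_nonneg (by linarith [hx.2]) _
  simpa using mul_nonneg h₁ h₂

section Weight

variable {p q : ℝ}

theorem wpq_eq_mul_expNegInvGlue (hp : 0 < p) (hq : 0 < q) (x : ℝ) :
    wpq p q x = (∫ s in (0 : ℝ)..1, Real.exp (-(s ^ (-p) * (1 - s) ^ (-q))))⁻¹ *
      expNegInvGlue (max x 0 ^ p * max (1 - x) 0 ^ q) := by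
  rw [wpq]
  split_ifs with hx
  · obtain ⟨hx₀, hx₁⟩ := hx
    have hx₁' : 0 < 1 - x := by linarith
    rw [max_eq_left hx₀.le, max_eq_left hx₁'.le, expNegInvGlue, if_neg (not_le.2 (by positivity)),
      mul_inv, ← Real.rpow_neg hx₀.le, ← Real.rpow_neg hx₁'.le]
  · have : max x 0 ^ p * max (1 - x) 0 ^ q = 0 := by
      rcases not_and_or.1 (Set.mem_Ioo.not.1 hx) with h | h
      · rw [max_eq_right (not_lt.1 h), Real.zero_rpow hp.ne', zero_mul]
      · rw [max_eq_right (show 1 - x ≤ 0 by linarith [not_lt.1 h]), Real.zero_rpow hq.ne',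
          mul_zero]
    rw [this, expNegInvGlue.zero_of_nonpos le_rfl, mul_zero]

theorem continuous_wpq (hp : 0 < p) (hq : 0 < q) : Continuous (wpq p q) := by
  rw [funext (wpq_eq_mul_expNegInvGlue hp hq)]
  have := Real.continuous_rpow_const hp.le
  have := Real.continuous_rpow_const hq.le
  fun_prop

theorem uniformContinuous_wpq (hp : 0 < p) (hq : 0 < q) : UniformContinuous (wpq p q) :=
  (HasCompactSupport.intro isCompact_Icc fun _ hx =>
    if_neg fun h => hx (Set.Ioo_subset_Icc_self h)).uniformContinuous_of_continuous
    (continuous_wpq hp hq)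

theorem wpq_pos {x : ℝ} (hx : x ∈ Set.Ioo 0 1) : 0 < wpq p q x := by
  rw [wpq, if_pos hx]
  have := integral_exp_neg_rpow_mul_rpow_pos p q
  positivity

theorem wpq_nonneg (x : ℝ) : 0 ≤ wpq p q x := by
  by_cases hx : x ∈ Set.Ioo 0 1
  · exact (wpq_pos hx).le
  · rw [wpq, if_neg hx]

theorem wpq_one : wpq p q 1 = 0 := if_neg fun h => h.2.false

end Weight

section PowIndicator

variable {r : ℕ}

noncomputable def powIndicator (r : ℕ) : ℕ → ℝ :=
  (Set.range (r ^ · : ℕ → ℕ)).indicator (↑)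

theorem powIndicator_zero : powIndicator r 0 = 0 := by
  by_cases h : 0 ∈ Set.range (r ^ · : ℕ → ℕ) <;> simp [powIndicator, h]

theorem powIndicator_nonneg (n : ℕ) : 0 ≤ powIndicator r n :=
  Set.indicator_nonneg (fun _ _ => Nat.cast_nonneg _) n

theorem sum_range_powIndicator_le (hr : 2 ≤ r) (N : ℕ) :
    ∑ n ∈ range N, powIndicator r n ≤ r * N := by
  classical
  rcases Nat.eq_zero_or_pos N with rfl | hN
  · simp
  set m := Nat.log r N + 1
  have hsub : {n ∈ range N | n ∈ Set.range (r ^ · : ℕ → ℕ)} ⊆ (range m).image (r ^ ·) := by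
    intro n hn
    simp only [mem_filter, mem_range, Set.mem_range] at hn
    obtain ⟨hnN, k, rfl⟩ := hn
    exact mem_image_of_mem _ (mem_range.2 (Nat.lt_succ_of_le (Nat.le_log_of_pow_le hr hnN.le)))
  have hgeom : ∑ n ∈ (range m).image (r ^ ·), n < r * N := by
    rw [sum_image (Nat.pow_right_injective hr).injOn]
    calc ∑ k ∈ range m, r ^ k < r ^ m := Nat.geomSum_lt hr fun k hk => mem_range.1 hk
      _ = r * r ^ Nat.log r N := pow_succ' _ _
      _ ≤ r * N := Nat.mul_le_mul_left _ (Nat.pow_log_le_self r hN.ne')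
  calc ∑ n ∈ range N, powIndicator r n
      = ∑ n ∈ range N with n ∈ Set.range (r ^ · : ℕ → ℕ), (n : ℝ) :=
        sum_indicator_eq_sum_filter _ (fun _ => ((↑) : ℕ → ℝ)) (fun _ => _) id
    _ ≤ ∑ n ∈ (range m).image (r ^ ·), (n : ℝ) :=
        sum_le_sum_of_subset_of_nonneg hsub fun _ _ _ => Nat.cast_nonneg _
    _ ≤ r * N := by
        have := (Nat.cast_le (α := ℝ)).2 hgeom.le
        push_cast at this
        exact this

theorem not_tendsto_inv_mul_powIndicator (hr : 2 ≤ r) (L : ℝ) :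
    ¬ Tendsto (fun N : ℕ => (N : ℝ)⁻¹ * powIndicator r N) atTop (𝓝 L) := by
  intro hL
  have hone : ∃ᶠ N : ℕ in atTop, (N : ℝ)⁻¹ * powIndicator r N ∈ ({1} : Set ℝ) := by
    refine frequently_atTop.2 fun a => ⟨r ^ a, (Nat.lt_pow_self hr).le, ?_⟩
    have : (r ^ a : ℝ) ≠ 0 := pow_ne_zero _ (by norm_cast; omega)
    simp [powIndicator, this]
  have hzero : ∃ᶠ N : ℕ in atTop, (N : ℝ)⁻¹ * powIndicator r N ∈ ({0} : Set ℝ) := by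
    refine frequently_atTop.2 fun a =>
      ⟨r ^ (a + 1) + 1, by linarith [Nat.lt_pow_self (n := a + 1) hr], ?_⟩
    rw [Set.mem_singleton_iff, powIndicator, Set.indicator_of_notMem, mul_zero]
    rintro ⟨k, hk⟩
    dsimp only at hk
    have h₁ : r ^ (a + 1) < r ^ k := by omega
    have h₂ : r ^ k < r ^ (a + 2) := by
      have : 2 ≤ r ^ (a + 1) := le_self_pow₀ (by omega) (by omega) |>.trans' hr
      rw [pow_succ]
      nlinarith
    rw [Nat.pow_lt_pow_iff_right (by omega)] at h₁ h₂
    omega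
  have h₁ := isClosed_singleton.mem_of_frequently_of_tendsto hone hL
  have h₀ := isClosed_singleton.mem_of_frequently_of_tendsto hzero hL
  rw [Set.mem_singleton_iff] at h₁ h₀
  exact one_ne_zero (h₁.symm.trans h₀)

end PowIndicator

/-- Convergence of the weighted averages does not imply convergence of the unweighted
Birkhoff (Cesàro) averages: there is a real sequence whose weighted averages tend to `0`
while its Cesàro averages diverge. -/
theorem exists_weighted_tendsto_cesaro_not_tendsto
    (p q : ℝ) (hp : 0 < p) (hq : 0 < q) :
    ∃ a : ℕ → ℝ,
      Tendsto (fun N : ℕ =>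
          (Apq p q N)⁻¹ * ∑ n ∈ Finset.Icc 1 N, wpq p q ((n : ℝ) / N) * a n)
        atTop (nhds 0) ∧
      ¬ ∃ L : ℝ, Tendsto (fun N : ℕ => (N : ℝ)⁻¹ * ∑ n ∈ Finset.Icc 1 N, a n)
        atTop (nhds L) := by
  refine ⟨fun n => powIndicator 4 n - powIndicator 4 (n - 1), ?_, ?_⟩
  · obtain ⟨c, hc, hA⟩ := exists_pos_mul_le_sum_range (continuous_wpq hp hq).continuousOn
      (fun x hx => wpq_pos ⟨by linarith [hx.1], by linarith [hx.2]⟩) wpq_nonneg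
    have hb : ∀ N : ℕ, ∑ n ∈ range N, |powIndicator 4 n| ≤ 4 * N := fun N => by
      simpa [abs_of_nonneg (powIndicator_nonneg _)] using
        sum_range_powIndicator_le (r := 4) (by norm_num) N
    exact tendsto_inv_mul_of_mul_le hc hA <|
      tendsto_inv_mul_sum_mul_sub_pred (uniformContinuous_wpq hp hq) wpq_one powIndicator_zero hb
  · rintro ⟨L, hL⟩
    simp_rw [sum_Icc_sub_pred _ powIndicator_zero] at hL
    exact not_tendsto_inv_mul_powIndicator (by norm_num) L hL
end
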